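/- There is no polynomially ambiguous weighted automaton B over the semiring (ℕ,+,×) in which every cycle has weight (product of its transition weights) equal to 1, such that the semantics of B on aⁿ equals the n-th Fibonacci number for all n: more precisely, if every cycle of B has weight 1 and B has ambiguity bounded by a polynomial of degree d, then its semantics on aⁿ is O(n^d), whereas Fₙ grows exponentially, a contradiction. -/

import Mathlib

variable {Q Q' A R : Type*}

/-- `RunFrom Δ p w ρ`: `ρ` is the list of states visited after `p` along a run
reading `w` that starts in `p`. -/
def RunFrom (Δ : Q → A → Q → Prop) : Q → List A → List Q → Prop
  | _, [], [] => True
  | p, a :: w, q :: ρ => Δ p a q ∧ RunFrom Δ q w ρ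
  | _, _, _ => False

/-- There is a run from `p` to `q` reading `w`. -/
def HasRun (Δ : Q → A → Q → Prop) (p : Q) (w : List A) (q : Q) : Prop :=
  ∃ ρ, RunFrom Δ p w ρ ∧ (p :: ρ).getLast (List.cons_ne_nil _ _) = q

/-- `m`-fold power of a word. -/
def wpow (u : List A) (m : ℕ) : List A := (List.replicate m u).flatten

/-- Aperiodicity of a nondeterministic automaton. -/
def Aperiodic (Δ : Q → A → Q → Prop) : Prop :=
  ∃ m, 1 ≤ m ∧ ∀ (p q : Q) (u : List A), u ≠ [] →
    (HasRun Δ p (wpow u m) q ↔ HasRun Δ p (wpow u (m + 1)) q)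

/-- `p` and `q` are in the same strongly connected component. -/
def SameSCC (Δ : Q → A → Q → Prop) (p q : Q) : Prop :=
  p = q ∨ ((∃ u : List A, u ≠ [] ∧ HasRun Δ p u q) ∧ (∃ v : List A, v ≠ [] ∧ HasRun Δ q v p))

/-- The automaton is unambiguous from `p` to `q`. -/
def UnambFromTo (Δ : Q → A → Q → Prop) (p q : Q) : Prop :=
  ∀ (u : List A) (ρ₁ ρ₂ : List Q), u ≠ [] →
    RunFrom Δ p u ρ₁ → RunFrom Δ p u ρ₂ →
    (p :: ρ₁).getLast (List.cons_ne_nil _ _) = q →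
    (p :: ρ₂).getLast (List.cons_ne_nil _ _) = q → ρ₁ = ρ₂

def SCCUnambiguous (Δ : Q → A → Q → Prop) : Prop :=
  ∀ p q : Q, SameSCC Δ p q → UnambFromTo Δ p q

/-- The set of accepting runs on `w`, represented as pairs of an initial state and
the list of subsequently visited states. -/
def AccRuns (Δ : Q → A → Q → Prop) (I F : Set Q) (w : List A) : Set (Q × List Q) :=
  {x | x.1 ∈ I ∧ RunFrom Δ x.1 w x.2 ∧ (x.1 :: x.2).getLast (List.cons_ne_nil _ _) ∈ F}

/-- The sequence of weights along a run. -/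
def wgtSeq (wgt : Q → A → Q → R) : Q → List A → List Q → List R
  | p, a :: w, q :: ρ => wgt p a q :: wgtSeq wgt q w ρ
  | _, _, _ => []

/-!
If every cycle has weight 1, cutting cycles out of a run does not change its weight, so every
run weighs as much as a loop-free one, and these have boundedly many transitions: all run weights
are bounded by a constant `K`. The value on `aⁿ` is then at most `K` times the number of accepting
runs, a polynomial in `n`, whereas `F (2k + 2) ≥ 2ᵏ` grows exponentially.
-/

open List

section PathWeight

def pathWeight [Monoid R] (c : Q → Q → R) : Q → List Q → R
  | _, [] => 1
  | p, q :: ρ => c p q * pathWeight c q ρ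

@[simp]
lemma pathWeight_nil [Monoid R] (c : Q → Q → R) (p : Q) : pathWeight c p [] = 1 := rfl

@[simp]
lemma pathWeight_cons [Monoid R] (c : Q → Q → R) (p q : Q) (ρ : List Q) :
    pathWeight c p (q :: ρ) = c p q * pathWeight c q ρ := rfl

lemma pathWeight_append_cons [Monoid R] (c : Q → Q → R) (p q : Q) (σ τ : List Q) :
    pathWeight c p (σ ++ q :: τ) = pathWeight c p (σ ++ [q]) * pathWeight c q τ := by
  induction σ generalizing p with
  | nil => simp
  | cons s σ ih => simp [ih, mul_assoc]

lemma pathWeight_le_pow [CommMonoid R] [PartialOrder R] [IsOrderedMonoid R] {c : Q → Q → R}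
    {B : R} (hc : ∀ x y, c x y ≤ B) (p : Q) (ρ : List Q) : pathWeight c p ρ ≤ B ^ ρ.length := by
  induction ρ generalizing p with
  | nil => simp
  | cons q ρ ih => simpa [pow_succ'] using mul_le_mul' (hc p q) (ih q)

theorem exists_nodup_sublist_pathWeight_eq [Monoid R] {r : Q → Q → Prop} {c : Q → Q → R}
    (hcycle : ∀ p σ, IsChain r (p :: (σ ++ [p])) → pathWeight c p (σ ++ [p]) = 1)
    (p : Q) (ρ : List Q) (hρ : IsChain r (p :: ρ)) :
    ∃ ρ', ρ' <+ ρ ∧ (p :: ρ').Nodup ∧ pathWeight c p ρ' = pathWeight c p ρ := by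
  induction hn : ρ.length using Nat.strong_induction_on generalizing p ρ with
  | _ n ih =>
  by_cases hp : p ∈ ρ
  · obtain ⟨σ, τ, rfl⟩ := append_of_mem hp
    obtain ⟨hσ, hτ⟩ := isChain_cons_split.mp hρ
    obtain ⟨τ', hsub, hnd, hw⟩ := ih τ.length (by simp [← hn]; omega) p τ hτ rfl
    refine ⟨τ', hsub.trans ((sublist_cons_self p τ).trans (sublist_append_right σ _)), hnd, ?_⟩
    rw [hw, pathWeight_append_cons, hcycle p σ hσ, one_mul]
  · cases ρ with
    | nil => exact ⟨[], Sublist.slnil, nodup_singleton p, rfl⟩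
    | cons q ρ =>
      obtain ⟨ρ', hsub, hnd, hw⟩ := ih ρ.length (by simp [← hn]) q ρ hρ.tail rfl
      refine ⟨q :: ρ', hsub.cons_cons q, nodup_cons.mpr ⟨fun h => hp ?_, hnd⟩, by simp [hw]⟩
      exact (hsub.cons_cons q).subset h

theorem exists_forall_pathWeight_le [Finite Q] {r : Q → Q → Prop} {c : Q → Q → ℕ}
    (hcycle : ∀ p σ, IsChain r (p :: (σ ++ [p])) → pathWeight c p (σ ++ [p]) = 1) :
    ∃ K, ∀ p ρ, IsChain r (p :: ρ) → pathWeight c p ρ ≤ K := by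
  have := Fintype.ofFinite Q
  obtain ⟨B, hB⟩ := Finite.exists_le fun e : Q × Q => c e.1 e.2
  refine ⟨(B + 1) ^ Fintype.card Q, fun p ρ hρ => ?_⟩
  obtain ⟨ρ', -, hnd, hw⟩ := exists_nodup_sublist_pathWeight_eq hcycle p ρ hρ
  have hlen : ρ'.length ≤ Fintype.card Q :=
    (Nat.le_succ _).trans (by simpa using hnd.length_le_card)
  calc pathWeight c p ρ = pathWeight c p ρ' := hw.symm
    _ ≤ (B + 1) ^ ρ'.length := pathWeight_le_pow (fun x y => (hB (x, y)).trans B.le_succ) p ρ'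
    _ ≤ (B + 1) ^ Fintype.card Q := Nat.pow_le_pow_right B.succ_pos hlen

end PathWeight

lemma finsum_mem_le_ncard_nsmul {α R : Type*} [AddCommMonoid R] [PartialOrder R]
    [IsOrderedAddMonoid R] {s : Set α} (hs : s.Finite) {f : α → R} {K : R}
    (hf : ∀ x ∈ s, f x ≤ K) : ∑ᶠ x ∈ s, f x ≤ s.ncard • K := by
  rw [finsum_mem_eq_finite_toFinset_sum _ hs, Set.ncard_eq_toFinset_card s hs]
  exact Finset.sum_le_card_nsmul _ _ _ fun x hx => hf x (hs.mem_toFinset.mp hx)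

section Runs

lemma RunFrom.length_eq {Δ : Q → A → Q → Prop} {p : Q} {w : List A} {ρ : List Q}
    (h : RunFrom Δ p w ρ) : ρ.length = w.length := by
  induction w generalizing p ρ with
  | nil => cases ρ <;> simp_all [RunFrom]
  | cons a w ih =>
    cases ρ with
    | nil => simp [RunFrom] at h
    | cons q ρ => simpa using ih h.2

lemma AccRuns.finite [Finite Q] (Δ : Q → A → Q → Prop) (I F : Set Q) (w : List A) :
    (AccRuns Δ I F w).Finite :=
  (Set.finite_univ.prod (List.finite_length_eq Q w.length)).subset
    fun _ hx => ⟨Set.mem_univ _, hx.2.1.length_eq⟩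

lemma runFrom_replicate_unit_iff {Δ : Q → Unit → Q → Prop} {p : Q} {ρ : List Q} {n : ℕ} :
    RunFrom Δ p (replicate n ()) ρ ↔ ρ.length = n ∧ IsChain (fun x y => Δ x () y) (p :: ρ) := by
  induction n generalizing p ρ with
  | zero => cases ρ <;> simp [RunFrom]
  | succ n ih => cases ρ <;> simp [RunFrom, replicate_succ, ih, and_left_comm]

lemma prod_wgtSeq_replicate_unit [Monoid R] (wgt : Q → Unit → Q → R) (p : Q) (ρ : List Q) :
    (wgtSeq wgt p (replicate ρ.length ()) ρ).prod = pathWeight (fun x y => wgt x () y) p ρ := by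
  induction ρ generalizing p with
  | nil => rfl
  | cons q ρ ih => simp [replicate_succ, wgtSeq, ih]

lemma pathWeight_cycle_eq_one [Monoid R] {Δ : Q → Unit → Q → Prop} {wgt : Q → Unit → Q → R}
    (hcyc : ∀ (q : Q) (w : List Unit) (ρ : List Q), w ≠ [] →
      RunFrom Δ q w ρ → (q :: ρ).getLast (List.cons_ne_nil _ _) = q →
      (wgtSeq wgt q w ρ).prod = 1)
    (p : Q) (σ : List Q) (h : IsChain (fun x y => Δ x () y) (p :: (σ ++ [p]))) :
    pathWeight (fun x y => wgt x () y) p (σ ++ [p]) = 1 := by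
  rw [← prod_wgtSeq_replicate_unit]
  exact hcyc p _ _ (by simp) (runFrom_replicate_unit_iff.mpr ⟨rfl, h⟩) (by simp)

end Runs

section Fibonacci

lemma two_pow_le_fib_two_mul_add_two (k : ℕ) : 2 ^ k ≤ Nat.fib (2 * k + 2) := by
  induction k with
  | zero => simp
  | succ k ih =>
    rw [show 2 * (k + 1) + 2 = 2 * k + 2 + 2 by ring, Nat.fib_add_two, pow_succ]
    have := Nat.fib_le_fib_succ (n := 2 * k + 2)
    omega

lemma exists_mul_succ_pow_lt_two_pow (b d : ℕ) : ∃ k, b * (k + 1) ^ d < 2 ^ k := by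
  have hb : (0 : ℝ) < 2 * (b + 1) := by positivity
  obtain ⟨n, hn, hle⟩ := ((Filter.eventually_gt_atTop 0).and
    ((isLittleO_pow_const_const_pow_of_one_lt (R := ℝ) d one_lt_two).def (inv_pos.mpr hb))).exists
  obtain ⟨k, rfl⟩ := Nat.exists_eq_succ_of_ne_zero hn.ne'
  refine ⟨k, ?_⟩
  rw [Real.norm_of_nonneg (by positivity), Real.norm_of_nonneg (by positivity),
    le_inv_mul_iff₀ hb, pow_succ] at hle
  have hpos : (1 : ℝ) ≤ ((k + 1 : ℕ) : ℝ) ^ d := one_le_pow₀ (by simp)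
  have : (b : ℝ) * ((k + 1 : ℕ) : ℝ) ^ d < 2 ^ k := by push_cast at hle hpos ⊢; nlinarith
  exact_mod_cast this

lemma exists_mul_pow_lt_fib (a d : ℕ) : ∃ n, n ≠ 0 ∧ a * n ^ d < Nat.fib n := by
  obtain ⟨k, hk⟩ := exists_mul_succ_pow_lt_two_pow (a * 2 ^ d) d
  refine ⟨2 * k + 2, by omega, ?_⟩
  calc a * (2 * k + 2) ^ d = a * 2 ^ d * (k + 1) ^ d := by
        rw [show 2 * k + 2 = 2 * (k + 1) by ring, mul_pow, mul_assoc]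
    _ < 2 ^ k := hk
    _ ≤ Nat.fib (2 * k + 2) := two_pow_le_fib_two_mul_add_two k

end Fibonacci

/-- There is no weighted automaton over `(ℕ, +, ×)` in which every cycle has weight 1
and whose ambiguity is polynomially bounded, computing the Fibonacci numbers on the
one-letter alphabet. -/
theorem no_cycleWeightOne_polyAmbiguous_fibonacci {Q : Type*} [Fintype Q]
    (Δ : Q → Unit → Q → Prop) (wgt : Q → Unit → Q → ℕ) (I F : Set Q)
    (hcyc : ∀ (q : Q) (w : List Unit) (ρ : List Q), w ≠ [] →
      RunFrom Δ q w ρ → (q :: ρ).getLast (List.cons_ne_nil _ _) = q →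
      (wgtSeq wgt q w ρ).prod = 1)
    (hpoly : ∃ C d : ℕ, ∀ w : List Unit, w ≠ [] →
      (AccRuns Δ I F w).ncard ≤ C * w.length ^ d) :
    ¬ ∀ n : ℕ, (∑ᶠ x ∈ AccRuns Δ I F (List.replicate n ()),
        (wgtSeq wgt x.1 (List.replicate n ()) x.2).prod) = Nat.fib n := by
  intro hfib
  obtain ⟨C, d, hC⟩ := hpoly
  obtain ⟨K, hK⟩ := exists_forall_pathWeight_le (pathWeight_cycle_eq_one hcyc)
  have hrun : ∀ n, ∀ x ∈ AccRuns Δ I F (replicate n ()),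
      (wgtSeq wgt x.1 (replicate n ()) x.2).prod ≤ K := by
    rintro n ⟨p, ρ⟩ ⟨-, hρ, -⟩
    obtain ⟨rfl, hchain⟩ := runFrom_replicate_unit_iff.mp hρ
    exact (prod_wgtSeq_replicate_unit wgt p ρ).trans_le (hK p ρ hchain)
  have hfib_le : ∀ n ≠ 0, Nat.fib n ≤ C * K * n ^ d := fun n hn =>
    calc Nat.fib n = _ := (hfib n).symm
      _ ≤ (AccRuns Δ I F (replicate n ())).ncard • K :=
        finsum_mem_le_ncard_nsmul (AccRuns.finite Δ I F _) (hrun n)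
      _ ≤ C * n ^ d * K := by
        rw [smul_eq_mul]
        gcongr
        simpa using hC (replicate n ()) (by simpa using hn)
      _ = C * K * n ^ d := by ring
  obtain ⟨n, hn, hlt⟩ := exists_mul_pow_lt_fib (C * K) d
  exact (hfib_le n hn).not_gt hlt
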